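/- Let G be a finite graph with probability weights μ and suppose G admits a fractional perfect matching between the two sides of G × K_2 (equivalently, a function f : E(G) → [0,∞) with ∑_{e ∋ v} f(e) = μ(v) for all v, where loops are allowed only if vv ∈ E(G)). Then every independent set I of G satisfies μ(I) ≤ μ(N(I)), and hence ᾱ(G^n) does not converge to 1. -/

import Mathlib

open Finset Filter

/-- `I` is an independent set of vertices in `G`. -/
def IsIndepSet {V : Type*} (G : SimpleGraph V) (I : Finset V) : Prop :=
  ∀ u ∈ I, ∀ v ∈ I, ¬ G.Adj u v

/-- The neighborhood `N(I)`: vertices adjacent to at least one vertex of `I`. -/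
noncomputable def nbhd {V : Type*} [Fintype V] (G : SimpleGraph V) (I : Finset V) : Finset V :=
  @Finset.filter _ (fun v => ∃ u ∈ I, G.Adj u v) (Classical.decPred _) Finset.univ

/-- Measure of a finite set of vertices: sum of the weights. -/
def fmeas {V : Type*} (μ : V → ℝ) (S : Finset V) : ℝ := ∑ v ∈ S, μ v

/-- The `n`-fold tensor (categorical) power of `G`. -/
def tpow {V : Type*} (G : SimpleGraph V) (n : ℕ) : SimpleGraph (Fin n → V) where
  Adj u v := u ≠ v ∧ ∀ i, G.Adj (u i) (v i)
  symm := ⟨fun u v h => ⟨h.1.symm, fun i => (h.2 i).symm⟩⟩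
  loopless := ⟨fun u h => h.1 rfl⟩

/-- Product measure of a set of `n`-tuples. -/
noncomputable def pmeas {V : Type*} (μ : V → ℝ) (n : ℕ) (S : Finset (Fin n → V)) : ℝ :=
  ∑ x ∈ S, ∏ i, μ (x i)

/-- `ᾱ(G)`: the supremum (= maximum) of the measures of independent sets of `G`. -/
noncomputable def alphaBar {V : Type*} (G : SimpleGraph V) (μ : V → ℝ) : ℝ :=
  sSup {x : ℝ | ∃ I : Finset V, IsIndepSet G I ∧ x = fmeas μ I}

/-- `ᾱ(G^n)` with the product measure. -/
noncomputable def alphaPow {V : Type*} (G : SimpleGraph V) (μ : V → ℝ) (n : ℕ) : ℝ :=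
  alphaBar (tpow G n) (fun x => ∏ i, μ (x i))

/-!
A fractional perfect matching `f` pushes the measure of `I` into `N(I)`: each `v ∈ I` spreads its
weight `μ v` over its neighbours, none of which receives more than its own weight. Products of
fractional perfect matchings are fractional perfect matchings of tensor powers, so in every `G^n`
an independent set `I` is disjoint from `N(I)` and not lighter than it, whence `μ(I) ≤ 1/2`.
-/

structure IsFractionalPerfectMatching {V : Type*} [Fintype V] (G : SimpleGraph V) (μ : V → ℝ)
    (f : V → V → ℝ) : Prop where
  nonneg : ∀ u v, 0 ≤ f u v
  symm : ∀ u v, f u v = f v u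
  eq_zero_of_not_adj : ∀ u v, ¬ G.Adj u v → f u v = 0
  sum_eq : ∀ v, ∑ u, f v u = μ v

lemma mem_nbhd {V : Type*} [Fintype V] {G : SimpleGraph V} {I : Finset V} {v : V} :
    v ∈ nbhd G I ↔ ∃ u ∈ I, G.Adj u v := by
  simp [nbhd]

lemma disjoint_nbhd_of_isIndepSet {V : Type*} [Fintype V] {G : SimpleGraph V} {I : Finset V}
    (hI : IsIndepSet G I) : Disjoint I (nbhd G I) :=
  disjoint_left.mpr fun v hv hvN ↦ by
    obtain ⟨u, hu, huv⟩ := mem_nbhd.mp hvN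
    exact hI u hu v hv huv

namespace IsFractionalPerfectMatching

variable {V : Type*} [Fintype V] {G : SimpleGraph V} {μ : V → ℝ} {f : V → V → ℝ}

lemma weight_nonneg (hf : IsFractionalPerfectMatching G μ f) (v : V) : 0 ≤ μ v :=
  hf.sum_eq v ▸ sum_nonneg fun u _ ↦ hf.nonneg v u

lemma sum_nbhd_eq (hf : IsFractionalPerfectMatching G μ f) {I : Finset V} {v : V} (hv : v ∈ I) :
    ∑ u ∈ nbhd G I, f v u = μ v := by
  rw [← hf.sum_eq v]
  refine sum_subset (subset_univ _) fun u _ hu ↦ ?_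
  by_contra hfvu
  exact hu (mem_nbhd.mpr ⟨v, hv, not_not.mp (mt (hf.eq_zero_of_not_adj v u) hfvu)⟩)

lemma fmeas_le_fmeas_nbhd (hf : IsFractionalPerfectMatching G μ f) (I : Finset V) :
    fmeas μ I ≤ fmeas μ (nbhd G I) :=
  calc fmeas μ I = ∑ v ∈ I, ∑ u ∈ nbhd G I, f v u :=
        sum_congr rfl fun v hv ↦ (hf.sum_nbhd_eq hv).symm
    _ = ∑ u ∈ nbhd G I, ∑ v ∈ I, f u v := by
      rw [sum_comm]; exact sum_congr rfl fun u _ ↦ sum_congr rfl fun v _ ↦ hf.symm v u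
    _ ≤ ∑ u ∈ nbhd G I, ∑ v, f u v :=
      sum_le_sum fun u _ ↦
        sum_le_sum_of_subset_of_nonneg (subset_univ I) fun v _ _ ↦ hf.nonneg u v
    _ = fmeas μ (nbhd G I) := sum_congr rfl fun u _ ↦ hf.sum_eq u

lemma fmeas_le_half (hf : IsFractionalPerfectMatching G μ f) (hμ : ∑ v, μ v = 1)
    {I : Finset V} (hI : IsIndepSet G I) : fmeas μ I ≤ 1 / 2 := by
  classical
  have hunion : fmeas μ I + fmeas μ (nbhd G I) ≤ 1 := by
    rw [fmeas, fmeas, ← sum_union (disjoint_nbhd_of_isIndepSet hI), ← hμ]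
    exact sum_le_sum_of_subset_of_nonneg (subset_univ _) fun v _ _ ↦ hf.weight_nonneg v
  linarith [hf.fmeas_le_fmeas_nbhd I]

lemma alphaBar_le_half (hf : IsFractionalPerfectMatching G μ f) (hμ : ∑ v, μ v = 1) :
    alphaBar G μ ≤ 1 / 2 :=
  Real.sSup_le (by rintro _ ⟨I, hI, rfl⟩; exact hf.fmeas_le_half hμ hI) (by norm_num)

lemma tpow (hf : IsFractionalPerfectMatching G μ f) {n : ℕ} (hn : n ≠ 0) :
    IsFractionalPerfectMatching (tpow G n) (fun x ↦ ∏ i, μ (x i))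
      (fun x y ↦ ∏ i, f (x i) (y i)) where
  nonneg x y := prod_nonneg fun i _ ↦ hf.nonneg _ _
  symm x y := prod_congr rfl fun i _ ↦ hf.symm _ _
  eq_zero_of_not_adj x y hxy := by
    by_cases hxy_eq : x = y
    · -- `n ≠ 0` is needed here: in `G^0` the empty product is `1` on the diagonal.
      subst hxy_eq
      exact prod_eq_zero (mem_univ ⟨0, Nat.pos_of_ne_zero hn⟩)
        (hf.eq_zero_of_not_adj _ _ (G.loopless.irrefl _))
    · obtain ⟨i, hi⟩ := not_forall.mp fun h ↦ hxy ⟨hxy_eq, h⟩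
      exact prod_eq_zero (mem_univ i) (hf.eq_zero_of_not_adj _ _ hi)
  sum_eq x := by
    classical
    rw [← Fintype.prod_sum]
    exact prod_congr rfl fun i _ ↦ hf.sum_eq (x i)

end IsFractionalPerfectMatching

theorem stmt_13_general {V : Type*} [Fintype V] (G : SimpleGraph V) (μ : V → ℝ)
    (hμ1 : ∑ v, μ v = 1)
    (f : V → V → ℝ)
    (hf0 : ∀ u v, 0 ≤ f u v)
    (hfsymm : ∀ u v, f u v = f v u)
    (hfsupp : ∀ u v, ¬ G.Adj u v → f u v = 0)
    (hfdeg : ∀ v, ∑ u, f v u = μ v) :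
    (∀ I : Finset V, IsIndepSet G I → fmeas μ I ≤ fmeas μ (nbhd G I)) ∧
    ¬ Tendsto (fun n => alphaPow G μ n) atTop (nhds 1) := by
  have hf : IsFractionalPerfectMatching G μ f := ⟨hf0, hfsymm, hfsupp, hfdeg⟩
  refine ⟨fun I _ ↦ hf.fmeas_le_fmeas_nbhd I, fun htend ↦ ?_⟩
  have hpow : ∀ n, n ≠ 0 → alphaPow G μ n ≤ 1 / 2 := fun n hn ↦
    (hf.tpow hn).alphaBar_le_half (by rw [← Fintype.sum_pow, hμ1, one_pow])
  obtain ⟨n, hn_large, hn_pos⟩ :=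
    ((htend.eventually (eventually_gt_nhds (by norm_num : (1 : ℝ) / 2 < 1))).and
      (eventually_ne_atTop 0)).exists
  exact (hpow n hn_pos).not_gt hn_large

theorem stmt_13 {V : Type*} [Fintype V] (G : SimpleGraph V) (μ : V → ℝ)
    (hμ0 : ∀ v, 0 ≤ μ v) (hμ1 : ∑ v, μ v = 1)
    (f : V → V → ℝ)
    (hf0 : ∀ u v, 0 ≤ f u v)
    (hfsymm : ∀ u v, f u v = f v u)
    (hfsupp : ∀ u v, ¬ G.Adj u v → f u v = 0)
    (hfdeg : ∀ v, ∑ u, f v u = μ v) :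
    (∀ I : Finset V, IsIndepSet G I → fmeas μ I ≤ fmeas μ (nbhd G I)) ∧
    ¬ Tendsto (fun n => alphaPow G μ n) atTop (nhds 1) :=
  stmt_13_general G μ hμ1 f hf0 hfsymm hfsupp hfdeg
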